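/- arXiv:1308.2972 — 5 statements merged into one kernel-verified Lean document; each statement's English description precedes it below -/
import Mathlib

section
/- With the hypotheses of Lagrange's lemma (a_0 > 0, first negative coefficient a_k, B the largest absolute value among negative coefficients), every real root of f is at most 1 + (B/a_0)^{1/k}. -/
/-!
For `x > 1`, keep `a₀ xⁿ` among the nonnegative leading terms and bound every coefficient from
the `k`-th on below by `-B`: `f x ≥ a₀ xⁿ - B (x^(n-k+1) - 1) / (x - 1)`. Once
`(x - 1)^k ≥ B / a₀`, the estimate `xⁿ (x - 1) ≥ x^(n-k+1) (x - 1)^k` gives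
`a₀ xⁿ (x - 1) ≥ B x^(n-k+1)`, so `f x > 0`.
-/

open Finset

theorem sum_Ico_pow_sub_eq_sum_range_pow {R : Type*} [Semiring R] (x : R) (k n : ℕ) :
    ∑ j ∈ Ico k (n + 1), x ^ (n - j) = ∑ i ∈ range (n + 1 - k), x ^ i := by
  rw [sum_Ico_eq_sum_range, ← sum_range_reflect (fun i => x ^ i)]
  refine sum_congr rfl fun i hi => ?_
  rw [mem_range] at hi
  congr 1
  omega

theorem sum_coeff_mul_pow_lower_bound {n k : ℕ} {a : ℕ → ℝ} {B x : ℝ} (hk : 1 ≤ k)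
    (hkn : k ≤ n + 1) (hfirst : ∀ j < k, 0 ≤ a j) (hB : ∀ j ≤ n, -B ≤ a j) (hx : 0 ≤ x) :
    a 0 * x ^ n - B * ∑ i ∈ range (n + 1 - k), x ^ i ≤
      ∑ j ∈ range (n + 1), a j * x ^ (n - j) := by
  rw [← sum_range_add_sum_Ico _ hkn, ← sum_Ico_pow_sub_eq_sum_range_pow, mul_sum,
    sub_eq_add_neg, ← sum_neg_distrib]
  gcongr with j hj j hj
  · simpa using single_le_sum (f := fun j => a j * x ^ (n - j))
      (fun j hj => mul_nonneg (hfirst j (mem_range.mp hj)) (pow_nonneg hx _))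
      (mem_range.mpr hk)
  · rw [neg_mul_eq_neg_mul]
    gcongr
    exact hB j (Nat.lt_succ_iff.mp (mem_Ico.mp hj).2)

theorem sub_one_pow_le_pow_pred_mul_sub_one {x : ℝ} (hx : 1 ≤ x) {k : ℕ} (hk : 1 ≤ k) :
    (x - 1) ^ k ≤ x ^ (k - 1) * (x - 1) := by
  obtain ⟨j, rfl⟩ := Nat.exists_eq_add_of_le' hk
  rw [pow_succ, Nat.add_sub_cancel]
  gcongr
  linarith

theorem sum_coeff_mul_pow_pos {n k : ℕ} {a : ℕ → ℝ} {B x : ℝ} (hk : 1 ≤ k) (hkn : k ≤ n + 1)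
    (hfirst : ∀ j < k, 0 ≤ a j) (hB : ∀ j ≤ n, -B ≤ a j) (hB0 : 0 < B) (hx : 1 < x)
    (hBx : B ≤ a 0 * (x - 1) ^ k) :
    0 < ∑ j ∈ range (n + 1), a j * x ^ (n - j) := by
  have hlow := sum_coeff_mul_pow_lower_bound (x := x) hk hkn hfirst hB (by linarith)
  have hgeom := geom_sum_mul x (n + 1 - k)
  have hpow : x ^ n = x ^ (n + 1 - k) * x ^ (k - 1) := by rw [← pow_add]; congr 1; omega
  have hlead : B * x ^ (n + 1 - k) ≤ a 0 * x ^ n * (x - 1) := calc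
    B * x ^ (n + 1 - k) ≤ a 0 * (x - 1) ^ k * x ^ (n + 1 - k) := by gcongr
    _ ≤ a 0 * (x ^ (k - 1) * (x - 1)) * x ^ (n + 1 - k) := by
      have := hfirst 0 hk
      gcongr
      exact sub_one_pow_le_pow_pred_mul_sub_one hx.le hk
    _ = a 0 * x ^ n * (x - 1) := by rw [hpow]; ring
  have hprod : 0 < (x - 1) * ∑ j ∈ range (n + 1), a j * x ^ (n - j) := by
    nlinarith [mul_le_mul_of_nonneg_left hlow (sub_nonneg.2 hx.le)]
  exact pos_of_mul_pos_right hprod (by linarith)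

theorem stmt_10_general (n : ℕ) (a : ℕ → ℝ) (ha : 0 < a 0)
    (k : ℕ) (hk1 : 1 ≤ k) (hkn : k ≤ n)
    (hak : a k < 0) (hfirst : ∀ j < k, 0 ≤ a j)
    (B : ℝ)
    (hB : ∀ j ≤ n, a j < 0 → |a j| ≤ B) :
    ∀ x : ℝ, (∑ j ∈ Finset.range (n + 1), a j * x ^ (n - j)) = 0 →
      x ≤ 1 + (B / a 0) ^ ((1 : ℝ) / k) := by
  intro x hroot
  by_contra! hx
  have hB0 : 0 < B := (abs_pos.2 hak.ne).trans_le (hB k hkn hak)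
  have hneg : ∀ j ≤ n, -B ≤ a j := fun j hj => by
    by_cases haj : a j < 0
    · exact neg_le_of_abs_le (hB j hj haj)
    · linarith
  have hr : 0 ≤ (B / a 0) ^ ((1 : ℝ) / k) := by positivity
  have hBx : B ≤ a 0 * (x - 1) ^ k := by
    rw [← div_le_iff₀' ha, ← Real.rpow_inv_natCast_pow (div_pos hB0 ha).le (by omega : k ≠ 0),
      ← one_div]
    exact pow_le_pow_left₀ hr (by linarith) k
  exact (sum_coeff_mul_pow_pos hk1 (by omega) hfirst hneg hB0 (by linarith) hBx).ne' hroot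

theorem stmt_10 (n : ℕ) (a : ℕ → ℝ) (ha : 0 < a 0)
    (k : ℕ) (hk1 : 1 ≤ k) (hkn : k ≤ n)
    (hak : a k < 0) (hfirst : ∀ j < k, 0 ≤ a j)
    (B : ℝ)
    (hB : ∀ j ≤ n, a j < 0 → |a j| ≤ B)
    (hBmem : ∃ j ≤ n, a j < 0 ∧ |a j| = B) :
    ∀ x : ℝ, (∑ j ∈ Finset.range (n + 1), a j * x ^ (n - j)) = 0 →
      x ≤ 1 + (B / a 0) ^ ((1 : ℝ) / k) :=
  stmt_10_general n a ha k hk1 hkn hak hfirst B hB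
end

section
/- Key inequality in Lagrange's lemma: for real x > 1, integers n ≥ k ≥ 1, and reals a_0, B > 0, one has a_0 x^n - B·(x^{n-k+1} - 1)/(x - 1) > (x^{n-k+1}/(x-1))·(a_0 (x-1)^k - B). -/
theorem pow_mul_pow_succ_le_pow_add_mul {R : Type*} [CommSemiring R] [PartialOrder R]
    [IsOrderedRing R] {x y : R} (hy : 0 ≤ y) (hyx : y ≤ x) (m j : ℕ) :
    x ^ m * y ^ (j + 1) ≤ x ^ (m + j) * y := by
  calc x ^ m * y ^ (j + 1) = x ^ m * (y ^ j * y) := by rw [pow_succ]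
    _ ≤ x ^ m * (x ^ j * y) := by gcongr; exact pow_nonneg (hy.trans hyx) m
    _ = x ^ (m + j) * y := by rw [pow_add, mul_assoc]

theorem stmt_11 (x : ℝ) (hx : 1 < x) (n k : ℕ) (hk1 : 1 ≤ k) (hkn : k ≤ n)
    (a₀ B : ℝ) (ha₀ : 0 < a₀) (hB : 0 < B) :
    (x ^ (n - k + 1) / (x - 1)) * (a₀ * (x - 1) ^ k - B) <
      a₀ * x ^ n - B * ((x ^ (n - k + 1) - 1) / (x - 1)) := by
  have hx1 : 0 < x - 1 := sub_pos.mpr hx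
  have hpow : x ^ (n - k + 1) * (x - 1) ^ k ≤ x ^ n * (x - 1) := by
    obtain ⟨j, rfl⟩ : ∃ j, k = j + 1 := ⟨k - 1, by omega⟩
    have h := pow_mul_pow_succ_le_pow_add_mul hx1.le (sub_le_self x zero_le_one) (n - (j + 1) + 1) j
    rwa [show n - (j + 1) + 1 + j = n by omega] at h
  -- after clearing `x - 1` the gap is `a₀ * (x ^ n * (x - 1) - x ^ (n - k + 1) * (x - 1) ^ k) + B`
  rw [div_mul_eq_mul_div, div_lt_iff₀ hx1, sub_mul _ _ (x - 1), mul_assoc B,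
    div_mul_cancel₀ _ hx1.ne']
  linarith [mul_le_mul_of_nonneg_left hpow ha₀.le]
end

section
/- (Optimality) With notation as in the existence theorem, if 0 < b' < b where b is the largest positive root of the Horner truncations f_1, ..., f_n, then at least one of f_1(b'), ..., f_n(b') is strictly negative; i.e., no smaller value of b yields a quotient and remainder with all nonnegative coefficients. -/
/-!
If every truncation `f_1(b'), …, f_n(b')` were nonnegative at some `b' < b`, the synthetic-division
identity `f_{k+1}(y) - f_{k+1}(x) = (y - x) · ∑_{i+j=k} f_i(x) y^j` would give
`f_p(b') < f_p(b) = 0`, because the sum contains `f_0(b') b^{p-1} = a_0 b^{p-1} > 0` and no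
negative term.
-/

/-- Horner truncations of the polynomial with coefficients `a 0, a 1, ...`:
`horner a 0 x = a 0`, `horner a (k+1) x = x * horner a k x + a (k+1)`. -/
def horner (a : ℕ → ℝ) : ℕ → ℝ → ℝ
  | 0, _ => a 0
  | k + 1, x => x * horner a k x + a (k + 1)

open Finset

theorem horner_succ_sub_horner_succ (a : ℕ → ℝ) (x y : ℝ) (k : ℕ) :
    horner a (k + 1) y - horner a (k + 1) x =
      (y - x) * ∑ ij ∈ antidiagonal k, horner a ij.1 x * y ^ ij.2 := by
  induction k with
  | zero => simp only [horner, Nat.antidiagonal_zero, sum_singleton]; ring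
  | succ k ih =>
    have step : horner a (k + 2) y - horner a (k + 2) x =
        y * (horner a (k + 1) y - horner a (k + 1) x) + (y - x) * horner a (k + 1) x := by
      simp only [horner]; ring
    rw [step, ih, Nat.antidiagonal_succ', sum_cons, sum_map, mul_add (y - x), add_comm (y * _)]
    congr 1
    · simp
    · rw [mul_left_comm, mul_sum]
      congr 1
      refine sum_congr rfl fun _ _ => ?_
      simp only [Function.Embedding.coe_prodMap, Function.Embedding.coeFn_mk, Prod.map_fst,
        Function.Embedding.refl_apply, Prod.map_snd, pow_succ]
      ring

theorem horner_succ_lt_horner_succ {a : ℕ → ℝ} {x y : ℝ} {k : ℕ} (ha : 0 < a 0) (hy : 0 < y)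
    (hxy : x < y) (hx : ∀ j, 1 ≤ j → j ≤ k → 0 ≤ horner a j x) :
    horner a (k + 1) x < horner a (k + 1) y := by
  have hsum : 0 < ∑ ij ∈ antidiagonal k, horner a ij.1 x * y ^ ij.2 := by
    refine sum_pos' (fun ij hij => mul_nonneg ?_ (pow_nonneg hy.le _)) ⟨(0, k), by simp, ?_⟩
    · rcases Nat.eq_zero_or_pos ij.1 with h0 | hpos
      · simpa [h0, horner] using ha.le
      · exact hx _ hpos (by have := mem_antidiagonal.1 hij; omega)
    · exact mul_pos ha (pow_pos hy k)
  have := horner_succ_sub_horner_succ a x y k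
  linarith [mul_pos (sub_pos.2 hxy) hsum]

theorem stmt_15_general (n : ℕ) (a : ℕ → ℝ) (ha : 0 < a 0)
    (b : ℝ) (hb : 0 < b)
    (hbroot : ∃ k, 1 ≤ k ∧ k ≤ n ∧ horner a k b = 0) :
    ∀ b' : ℝ, 0 < b' → b' < b → ∃ k, 1 ≤ k ∧ k ≤ n ∧ horner a k b' < 0 := by
  intro b' _ hb'b
  by_contra! hcon
  obtain ⟨_ | k, hk1, hkn, hkb⟩ := hbroot
  · omega
  have := horner_succ_lt_horner_succ ha hb hb'b (k := k) fun j hj hjk => hcon j hj (by omega)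
  linarith [hcon (k + 1) hk1 hkn]

theorem stmt_15 (n : ℕ) (a : ℕ → ℝ) (ha : 0 < a 0)
    (hroot : ∃ x : ℝ, 0 < x ∧ horner a n x = 0)
    (b : ℝ) (hb : 0 < b)
    (hbroot : ∃ k, 1 ≤ k ∧ k ≤ n ∧ horner a k b = 0)
    (hbmax : ∀ (x : ℝ) (k : ℕ), 1 ≤ k → k ≤ n → 0 < x → horner a k x = 0 → x ≤ b) :
    ∀ b' : ℝ, 0 < b' → b' < b → ∃ k, 1 ≤ k ∧ k ≤ n ∧ horner a k b' < 0 :=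
  stmt_15_general n a ha b hb hbroot
end

section
/- (Conjecture, now theorem) Let f be a real polynomial with positive leading coefficient having at least one positive root a. Then there exists b ≥ a such that when f is divided by (x - b), the remainder is nonnegative and all nonzero coefficients of the quotient polynomial are positive. -/
/-! For `b` large the quotient of `f` by `X - b` has all coefficients below `deg f` at least the
leading coefficient `c` of `f`: they satisfy `q_{d-1} = c` and `q_i = f_{i+1} + b q_{i+1}`, so
`q_{i+1} ≥ c` gives `q_i ≥ f_{i+1} + b c ≥ c` as soon as `b c ≥ c - f_{i+1}`. The remainder is
`f(b)`, which is positive for large `b`. -/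

open Polynomial Filter

namespace Polynomial

section CommRing

variable {R : Type*} [CommRing R]

theorem eq_X_sub_C_mul_divByMonic_add_C_eval (f : R[X]) (b : R) :
    f = (X - C b) * (f /ₘ (X - C b)) + C (f.eval b) := by
  rw [← modByMonic_X_sub_C_eq_C_eval, add_comm, modByMonic_add_div]

theorem coeff_divByMonic_X_sub_C_eq_zero {f : R[X]} (b : R) {n : ℕ} (hn : f.natDegree ≤ n) :
    (f /ₘ (X - C b)).coeff n = 0 := by
  rw [coeff_divByMonic_X_sub_C, Finset.Icc_eq_empty (by omega), Finset.sum_empty]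

variable [LinearOrder R] [IsStrictOrderedRing R]

theorem leadingCoeff_le_coeff_divByMonic_X_sub_C {f : R[X]} {b : R} (hb : 0 ≤ b)
    (hcoeff : ∀ i < f.natDegree, f.leadingCoeff - f.coeff i ≤ b * f.leadingCoeff)
    {i : ℕ} (hi : i < f.natDegree) : f.leadingCoeff ≤ (f /ₘ (X - C b)).coeff i := by
  set q := f /ₘ (X - C b)
  refine Nat.decreasingInduction' (P := fun k => f.leadingCoeff ≤ q.coeff k)
    (fun k hk _ ih => ?_) (Nat.le_sub_one_of_lt hi) ?_
  · have hk1 : k + 1 < f.natDegree := by omega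
    calc f.leadingCoeff
        ≤ f.coeff (k + 1) + b * f.leadingCoeff := by linarith [hcoeff (k + 1) hk1]
      _ ≤ f.coeff (k + 1) + b * q.coeff (k + 1) := by gcongr
      _ = q.coeff k := (coeff_divByMonic_X_sub_C_rec f b k).symm
  · have hd : f.natDegree - 1 + 1 = f.natDegree := by omega
    rw [coeff_divByMonic_X_sub_C_rec, hd, coeff_divByMonic_X_sub_C_eq_zero b le_rfl, mul_zero,
      add_zero, leadingCoeff]

theorem coeff_divByMonic_X_sub_C_pos_of_ne_zero {f : R[X]} (hf : 0 < f.leadingCoeff) {b : R}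
    (hb : 0 ≤ b) (hcoeff : ∀ i < f.natDegree, f.leadingCoeff - f.coeff i ≤ b * f.leadingCoeff)
    {i : ℕ} (hi : (f /ₘ (X - C b)).coeff i ≠ 0) : 0 < (f /ₘ (X - C b)).coeff i := by
  have hdeg : i < f.natDegree := by
    by_contra! h
    exact hi (coeff_divByMonic_X_sub_C_eq_zero b h)
  exact hf.trans_le (leadingCoeff_le_coeff_divByMonic_X_sub_C hb hcoeff hdeg)

end CommRing

theorem eventually_atTop_eval_pos {𝕜 : Type*} [NormedField 𝕜] [LinearOrder 𝕜]
    [IsStrictOrderedRing 𝕜] [OrderTopology 𝕜] {f : 𝕜[X]} (hf : 0 < f.leadingCoeff) :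
    ∀ᶠ x in atTop, 0 < f.eval x := by
  rcases lt_or_ge 0 f.degree with hdeg | hdeg
  · exact (f.tendsto_atTop_of_leadingCoeff_nonneg hdeg hf.le).eventually_gt_atTop 0
  · rw [eq_C_of_degree_le_zero hdeg] at hf ⊢
    exact Eventually.of_forall fun _ => by simpa using hf

theorem eventually_atTop_sub_coeff_le_mul_leadingCoeff {𝕜 : Type*} [Field 𝕜] [LinearOrder 𝕜]
    [IsStrictOrderedRing 𝕜] {f : 𝕜[X]} (hf : 0 < f.leadingCoeff) :
    ∀ᶠ b in atTop, ∀ i < f.natDegree, f.leadingCoeff - f.coeff i ≤ b * f.leadingCoeff := by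
  filter_upwards [(eventually_all_finset (Finset.range f.natDegree)).2 fun i _ =>
    (tendsto_id.atTop_mul_const hf).eventually_ge_atTop (f.leadingCoeff - f.coeff i)]
    with b hb i hi using hb i (Finset.mem_range.2 hi)

end Polynomial

open Polynomial in
theorem stmt_16_general (f : ℝ[X]) (hf : 0 < f.leadingCoeff)
    (a : ℝ) :
    ∃ b ≥ a, ∃ (q : ℝ[X]) (r : ℝ),
      f = (X - C b) * q + C r ∧ 0 ≤ r ∧
      ∀ i, q.coeff i ≠ 0 → 0 < q.coeff i := by
  obtain ⟨b, hab, hb, hcoeff, hfb⟩ := ((eventually_ge_atTop a).and <| (eventually_ge_atTop 0).and <|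
    (eventually_atTop_sub_coeff_le_mul_leadingCoeff hf).and (eventually_atTop_eval_pos hf)).exists
  exact ⟨b, hab, f /ₘ (X - C b), f.eval b, eq_X_sub_C_mul_divByMonic_add_C_eval f b, hfb.le,
    fun i hi => coeff_divByMonic_X_sub_C_pos_of_ne_zero hf hb hcoeff hi⟩

open Polynomial in
theorem stmt_16 (f : ℝ[X]) (hf : 0 < f.leadingCoeff)
    (a : ℝ) (ha : 0 < a) (haroot : f.eval a = 0) :
    ∃ b ≥ a, ∃ (q : ℝ[X]) (r : ℝ),
      f = (X - C b) * q + C r ∧ 0 ≤ r ∧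
      ∀ i, q.coeff i ≠ 0 → 0 < q.coeff i :=
  stmt_16_general f hf a
end

section
/- Suppose b > 0 satisfies: the Horner truncations of f at b satisfy f_1(b), ..., f_{n-1}(b) ≥ 0 and f_n(b) > 0, where f has positive leading coefficient. Then for every b' ≥ b, also f_1(b'), ..., f_{n-1}(b') ≥ 0 and f_n(b') > 0; i.e., the set of b that 'work' is an upward-closed interval. -/
theorem horner_le_horner_of_nonneg {a : ℕ → ℝ} {x y : ℝ} (hx : 0 ≤ x) (hxy : x ≤ y) :
    ∀ {k : ℕ}, (∀ j < k, 0 ≤ horner a j x) → horner a k x ≤ horner a k y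
  | 0, _ => le_rfl
  | k + 1, h => by
    have ih : horner a k x ≤ horner a k y :=
      horner_le_horner_of_nonneg hx hxy fun j hj => h j (by omega)
    show x * horner a k x + a (k + 1) ≤ y * horner a k y + a (k + 1)
    gcongr ?_ + _
    calc x * horner a k x ≤ y * horner a k x := mul_le_mul_of_nonneg_right hxy (h k k.lt_succ_self)
      _ ≤ y * horner a k y := mul_le_mul_of_nonneg_left ih (hx.trans hxy)

theorem stmt_19 (n : ℕ) (a : ℕ → ℝ) (ha : 0 < a 0) (b : ℝ) (hb : 0 < b)
    (hnonneg : ∀ k, 1 ≤ k → k ≤ n - 1 → 0 ≤ horner a k b)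
    (hpos : 0 < horner a n b) :
    ∀ b' : ℝ, b ≤ b' →
      (∀ k, 1 ≤ k → k ≤ n - 1 → 0 ≤ horner a k b') ∧ 0 < horner a n b' := by
  intro b' hbb'
  have hlow : ∀ j < n, 0 ≤ horner a j b
    | 0, _ => ha.le
    | j + 1, hj => hnonneg (j + 1) (by omega) (by omega)
  have hmono : ∀ k ≤ n, horner a k b ≤ horner a k b' := fun k hk =>
    horner_le_horner_of_nonneg hb.le hbb' fun j hj => hlow j (by omega)
  exact ⟨fun k hk1 hkn => (hnonneg k hk1 hkn).trans (hmono k (by omega)),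
    hpos.trans_le (hmono n le_rfl)⟩
end
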